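/- Every word in the constructed language 𝓛_w is derivable from w: if u ∈ 𝓛_w then u can be obtained from w by a finite sequence of the reductions LL ↦ L, RR ↦ R, LR ↦ empty, RL ↦ empty (on adjacent letters) together with tail formation (passing to a suffix). -/

import Mathlib

/-- The alphabet of orbit pattern tags: `L` for a leftward move, `R` for a rightward move. -/
inductive Letter : Type
  | L : Letter
  | R : Letter
deriving DecidableEq

open Letter

/-- A continuous interval map `f` admits the orbit pattern tag `w` if there is an
eventually fixed orbit `x 0, x 1, ..., x w.length` of `f` (the last point being fixed,
all earlier points different from it) whose `j`-th move is labelled by the `j`-th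
letter of `w`: `L` if the orbit moves left, `R` if it moves right. -/
def Admits (f : ℝ → ℝ) (w : List Letter) : Prop :=
  ∃ x : ℕ → ℝ,
    (∀ j < w.length, f (x j) = x (j + 1)) ∧
    f (x w.length) = x w.length ∧
    (∀ j < w.length, x j ≠ x w.length) ∧
    (∀ j : Fin w.length,
      (w.get j = L ∧ x ((j : ℕ) + 1) < x (j : ℕ)) ∨
      (w.get j = R ∧ x (j : ℕ) < x ((j : ℕ) + 1)))

/-- One step of reduction on words: replace an adjacent `LL` by `L`, an adjacent `RR`
by `R`, or delete an adjacent `LR` or `RL`. -/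
inductive Red : List Letter → List Letter → Prop
  | ll (v v' : List Letter) : Red (v ++ [L, L] ++ v') (v ++ [L] ++ v')
  | rr (v v' : List Letter) : Red (v ++ [R, R] ++ v') (v ++ [R] ++ v')
  | lr (v v' : List Letter) : Red (v ++ [L, R] ++ v') (v ++ v')
  | rl (v v' : List Letter) : Red (v ++ [R, L] ++ v') (v ++ v')

/-- One derivation step: a reduction, or tail formation (passing to a suffix). -/
inductive Step : List Letter → List Letter → Prop
  | red {w u : List Letter} : Red w u → Step w u
  | tail {w u : List Letter} : u <:+ w → Step w u

/-- `u` is obtained from `w` by finitely many reductions. -/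
def Reducible : List Letter → List Letter → Prop := Relation.ReflTransGen Red

/-- `u` is derivable from `w`: finitely many reductions and tail formations, in any order. -/
def Derivable : List Letter → List Letter → Prop := Relation.ReflTransGen Step

/-- The constructed language `𝓛 w`.  For `|w| ≤ 2` it consists of all suffixes of `w`;
for longer words it is defined by the recursion of Definition 1.3:
`𝓛 (a·a·a·w') = 𝓛 (a·a·w') ∪ a·(𝓛 (a·a·w'))ᵃ`,
`𝓛 (a·a·b·w') = 𝓛 (a·b·w') ∪ a·𝓛 (a·b·w')` (`a ≠ b`), and
`𝓛 (a·b·w') = 𝓛 (b·w') ∪ a·(𝓛 (b·w'))ᵇ` (`a ≠ b`),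
where the superscript restricts to words starting with the given letter. -/
def Lang : List Letter → Set (List Letter)
  | [] => { [] }
  | [a] => { [], [a] }
  | [a, b] => { [], [b], [a, b] }
  | (a :: b :: c :: rest) =>
      let T := Lang (b :: c :: rest)
      if a = b then
        if b = c then T ∪ (fun u => a :: u) '' {u ∈ T | u.head? = some a}
        else T ∪ (fun u => a :: u) '' T
      else T ∪ (fun u => a :: u) '' {u ∈ T | u.head? = some b}

/-
Every word reduces to one of length at most one, so `a :: p` reduces to `[a]` or to `[]`, and hence
every word reduces to each of its suffixes beginning with its own first letter. Along the recursion
defining `Lang`, every `u ∈ Lang t` is then reducible from a suffix of `t` beginning with the same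
letter as `u`; a tail step to that suffix followed by the reductions derives `u` from `t`.
-/

theorem Letter.eq_or_eq_of_ne {a b : Letter} (h : a ≠ b) (d : Letter) : d = a ∨ d = b := by
  cases a <;> cases b <;> cases d <;> simp_all

namespace Red

theorem double (a : Letter) (v : List Letter) : Red (a :: a :: v) (a :: v) := by
  cases a
  · exact ll [] v
  · exact rr [] v

theorem cancel {a b : Letter} (h : a ≠ b) (v : List Letter) : Red (a :: b :: v) v := by
  cases a <;> cases b
  · exact absurd rfl h
  · exact lr [] v
  · exact rl [] v
  · exact absurd rfl h

theorem cons (a : Letter) {s s' : List Letter} (h : Red s s') : Red (a :: s) (a :: s') := by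
  cases h with
  | ll v v' => exact ll (a :: v) v'
  | rr v v' => exact rr (a :: v) v'
  | lr v v' => exact lr (a :: v) v'
  | rl v v' => exact rl (a :: v) v'

theorem append_right {s s' : List Letter} (h : Red s s') (z : List Letter) :
    Red (s ++ z) (s' ++ z) := by
  cases h with
  | ll v v' => simpa using ll v (v' ++ z)
  | rr v v' => simpa using rr v (v' ++ z)
  | lr v v' => simpa using lr v (v' ++ z)
  | rl v v' => simpa using rl v (v' ++ z)

end Red

namespace Reducible

theorem cons (a : Letter) {s s' : List Letter} (h : Reducible s s') :
    Reducible (a :: s) (a :: s') :=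
  Relation.ReflTransGen.lift _ (fun _ _ hr => hr.cons a) _ _ h

theorem append_right {s s' : List Letter} (h : Reducible s s') (z : List Letter) :
    Reducible (s ++ z) (s' ++ z) :=
  Relation.ReflTransGen.lift (· ++ z) (fun _ _ hr => hr.append_right z) _ _ h

end Reducible

theorem exists_reducible_length_le_one : ∀ x : List Letter, ∃ y, Reducible x y ∧ y.length ≤ 1
  | [] => ⟨[], .refl, by simp⟩
  | [a] => ⟨[a], .refl, by simp⟩
  | a :: b :: x => by
    by_cases hab : a = b
    · subst hab
      obtain ⟨y, hy, hlen⟩ := exists_reducible_length_le_one (a :: x)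
      exact ⟨y, .head (Red.double a x) hy, hlen⟩
    · obtain ⟨y, hy, hlen⟩ := exists_reducible_length_le_one x
      exact ⟨y, .head (Red.cancel hab x) hy, hlen⟩

theorem reducible_cons_singleton_or_nil (a : Letter) (p : List Letter) :
    Reducible (a :: p) [a] ∨ Reducible (a :: p) [] := by
  obtain ⟨y, hy, hlen⟩ := exists_reducible_length_le_one p
  match y, hlen with
  | [], _ => exact .inl (hy.cons a)
  | [d], _ =>
    by_cases hda : d = a
    · subst hda
      exact .inl ((hy.cons d).tail (Red.double d []))
    · exact .inr ((hy.cons a).tail (Red.cancel (Ne.symm hda) []))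

theorem reducible_cons_cons_singleton (a : Letter) (v : List Letter) :
    Reducible (a :: a :: v) [a] :=
  (reducible_cons_singleton_or_nil a v).elim
    (fun h => (h.cons a).tail (Red.double a [])) (fun h => h.cons a)

theorem Reducible.of_suffix {s v : List Letter} (h : s <:+ v) (hs : s.head? = v.head?) :
    Reducible v s := by
  obtain ⟨_ | ⟨a, p⟩, rfl⟩ := h
  · exact .refl
  obtain ⟨s, rfl⟩ : ∃ s', s = a :: s' := by
    cases s with
    | nil => simp at hs
    | cons d s' => simp_all
  rcases reducible_cons_singleton_or_nil a p with hp | hp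
  · exact (hp.append_right (a :: s)).tail (Red.double a s)
  · exact hp.append_right (a :: s)

def SuffixReducible (t u : List Letter) : Prop :=
  ∃ s, s <:+ t ∧ s.head? = u.head? ∧ Reducible s u

namespace SuffixReducible

theorem refl (t : List Letter) : SuffixReducible t t :=
  ⟨t, List.suffix_refl t, rfl, .refl⟩

theorem of_reducible {a : Letter} {t u : List Letter} (h : Reducible (a :: t) (a :: u)) :
    SuffixReducible (a :: t) (a :: u) :=
  ⟨_, List.suffix_refl _, rfl, h⟩

theorem cons {t u : List Letter} (h : SuffixReducible t u) (a : Letter) :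
    SuffixReducible (a :: t) u :=
  let ⟨s, hs, hhead, hred⟩ := h
  ⟨s, hs.trans (List.suffix_cons a t), hhead, hred⟩

theorem of_cons_of_ne {a d : Letter} {v u : List Letter} (h : SuffixReducible (a :: v) (d :: u))
    (hd : d ≠ a) : SuffixReducible v (d :: u) := by
  obtain ⟨s, hs, hhead, hred⟩ := h
  rcases List.suffix_cons_iff.mp hs with rfl | hs
  · exact absurd (Option.some_injective _ hhead).symm hd
  · exact ⟨s, hs, hhead, hred⟩

theorem reducible {t u : List Letter} (h : SuffixReducible t u) (hu : u.head? = t.head?) :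
    Reducible t u :=
  let ⟨_, hs, hhead, hred⟩ := h
  Relation.ReflTransGen.trans (Reducible.of_suffix hs (hhead.trans hu)) hred

end SuffixReducible

theorem suffixReducible_of_mem_lang : ∀ {t u : List Letter}, u ∈ Lang t → SuffixReducible t u
  | [], _, rfl => .refl []
  | [a], u, hu => by
    rcases hu with rfl | rfl
    · exact (SuffixReducible.refl []).cons a
    · exact .refl [a]
  | [a, b], u, hu => by
    rcases hu with rfl | rfl | rfl
    · exact ((SuffixReducible.refl []).cons b).cons a
    · exact (SuffixReducible.refl [b]).cons a
    · exact .refl [a, b]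
  | a :: b :: c :: rest, u, hu => by
    have ih {x : List Letter} (hx : x ∈ Lang (b :: c :: rest)) := suffixReducible_of_mem_lang hx
    unfold Lang at hu
    split_ifs at hu with hab hbc
    · subst hab hbc
      rcases hu with hu | ⟨x, ⟨hx, hxa⟩, rfl⟩
      · exact (ih hu).cons a
      · exact .of_reducible (((ih hx).reducible hxa).cons a)
    · subst hab
      rcases hu with hu | ⟨_ | ⟨d, x⟩, hx, rfl⟩
      · exact (ih hu).cons a
      · exact .of_reducible (reducible_cons_cons_singleton a _)
      rcases Letter.eq_or_eq_of_ne hbc d with rfl | rfl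
      · exact .of_reducible (((ih hx).reducible rfl).cons d)
      · have hx' : Reducible (d :: rest) (d :: x) :=
          ((ih hx).of_cons_of_ne (Ne.symm hbc)).reducible rfl
        exact .of_reducible (.head (Red.double a _) (hx'.cons a))
    · rcases hu with hu | ⟨x, ⟨hx, hxb⟩, rfl⟩
      · exact (ih hu).cons a
      · exact .of_reducible (((ih hx).reducible hxb).cons a)

/-- every word in the constructed language is derivable from w. -/
theorem stmt15 (w u : List Letter) (h : u ∈ Lang w) : Derivable w u := by
  obtain ⟨s, hs, -, hred⟩ := suffixReducible_of_mem_lang h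
  exact .head (Step.tail hs) (Relation.ReflTransGen.mono (fun _ _ hr => Step.red hr) _ _ hred)
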